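/- arXiv:1412.3633 — 3 statements merged into one kernel-verified Lean document; each statement's English description precedes it below -/
import Mathlib

section
/- For every theory Σ, with Σ^PL = {A + i ⇒ B + i | A ⇒ B ∈ Σ, i ∈ ℤ}, it holds that Mod(Σ) = Mod^PL(Σ^PL); consequently, for every attribute implication A ⇒ B annotated by time points, Σ ⊨ A ⇒ B if and only if Σ^PL ⊨_PL A ⇒ B. -/
namespace TAI

variable {Y : Type*}

/-- Time shift of a set of time-annotated attributes: `M + j`. -/
def shiftS (M : Set (Y × ℤ)) (j : ℤ) : Set (Y × ℤ) :=
  (fun p : Y × ℤ => (p.1, p.2 + j)) '' M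

/-- Time shift of a finite set of time-annotated attributes: `A + j`. -/
def shiftF [DecidableEq Y] (A : Finset (Y × ℤ)) (j : ℤ) : Finset (Y × ℤ) :=
  A.image (fun p => (p.1, p.2 + j))

/-- An attribute implication over `Y` annotated by time points: a pair
`(A, B)` of finite subsets of `T_Y = Y × ℤ`, read as `A ⇒ B`. -/
abbrev Fml (Y : Type*) := Finset (Y × ℤ) × Finset (Y × ℤ)

/-- `A ⇒ B` is true in `M ⊆ T_Y`: for every `i ∈ ℤ`, `A + i ⊆ M` implies `B + i ⊆ M`. -/
def Holds [DecidableEq Y] (M : Set (Y × ℤ)) (φ : Fml Y) : Prop :=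
  ∀ i : ℤ, ↑(shiftF φ.1 i) ⊆ M → ↑(shiftF φ.2 i) ⊆ M

/-- The models of a theory `T`. -/
def Mods [DecidableEq Y] (T : Set (Fml Y)) : Set (Set (Y × ℤ)) :=
  {M | ∀ φ ∈ T, Holds M φ}

/-- Semantic entailment: `T ⊨ φ`. -/
def Entails [DecidableEq Y] (T : Set (Fml Y)) (φ : Fml Y) : Prop :=
  ∀ M ∈ Mods T, Holds M φ

/-- Semantic closure `[M]_Σ`. -/
def semClos [DecidableEq Y] (T : Set (Fml Y)) (M : Set (Y × ℤ)) : Set (Y × ℤ) :=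
  ⋂₀ {N | N ∈ Mods T ∧ M ⊆ N}

/-- Classical (time-point-free) truth: `M ⊨_PL A ⇒ B` iff `A ⊆ M` implies `B ⊆ M`. -/
def HoldsPL (M : Set (Y × ℤ)) (φ : Fml Y) : Prop :=
  ↑φ.1 ⊆ M → ↑φ.2 ⊆ M

/-- Classical models. -/
def ModsPL (T : Set (Fml Y)) : Set (Set (Y × ℤ)) :=
  {M | ∀ φ ∈ T, HoldsPL M φ}

/-- Classical semantic entailment `⊨_PL`. -/
def EntailsPL (T : Set (Fml Y)) (φ : Fml Y) : Prop :=
  ∀ M ∈ ModsPL T, HoldsPL M φ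

/-- `Σ^PL = {A + i ⇒ B + i | A ⇒ B ∈ Σ, i ∈ ℤ}`. -/
def shiftAll [DecidableEq Y] (T : Set (Fml Y)) : Set (Fml Y) :=
  {ψ | ∃ φ ∈ T, ∃ i : ℤ, ψ = (shiftF φ.1 i, shiftF φ.2 i)}

/-- One step of the syntactic closure construction. -/
def synStep [DecidableEq Y] (T : Set (Fml Y)) (M : Set (Y × ℤ)) : Set (Y × ℤ) :=
  M ∪ ⋃₀ {S | ∃ φ ∈ T, ∃ i : ℤ, ↑(shiftF φ.1 i) ⊆ M ∧ S = (↑(shiftF φ.2 i) : Set (Y × ℤ))}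

/-- `M_Σ^n`. -/
def synIter [DecidableEq Y] (T : Set (Fml Y)) (M : Set (Y × ℤ)) : ℕ → Set (Y × ℤ)
  | 0 => M
  | n + 1 => synStep T (synIter T M n)

/-- The syntactic closure `M_Σ^ω`. -/
def synClos [DecidableEq Y] (T : Set (Fml Y)) (M : Set (Y × ℤ)) : Set (Y × ℤ) :=
  ⋃ n : ℕ, synIter T M n

/-- Provability from `T` using the rules (Ax), (Cut) and (Shf). -/
inductive Prov [DecidableEq Y] (T : Set (Fml Y)) : Fml Y → Prop
  | hyp {φ : Fml Y} : φ ∈ T → Prov T φ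
  | ax (A B : Finset (Y × ℤ)) : Prov T (A ∪ B, A)
  | cut {A B C D : Finset (Y × ℤ)} :
      Prov T (A, B) → Prov T (B ∪ C, D) → Prov T (A ∪ C, D)
  | shf {A B : Finset (Y × ℤ)} (i : ℤ) :
      Prov T (A, B) → Prov T (shiftF A i, shiftF B i)

/-- Provability from `T` using only the rules (Ax) and (Cut) (no time shifts). -/
inductive ProvAC [DecidableEq Y] (T : Set (Fml Y)) : Fml Y → Prop
  | hyp {φ : Fml Y} : φ ∈ T → ProvAC T φ
  | ax (A B : Finset (Y × ℤ)) : ProvAC T (A ∪ B, A)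
  | cut {A B C D : Finset (Y × ℤ)} :
      ProvAC T (A, B) → ProvAC T (B ∪ C, D) → ProvAC T (A ∪ C, D)

/-- Provability from `T` using the rules (Ax) and (Cut_i). -/
inductive ProvCuti [DecidableEq Y] (T : Set (Fml Y)) : Fml Y → Prop
  | hyp {φ : Fml Y} : φ ∈ T → ProvCuti T φ
  | ax (A B : Finset (Y × ℤ)) : ProvCuti T (A ∪ B, A)
  | cuti {A B C D : Finset (Y × ℤ)} (i : ℤ) :
      ProvCuti T (A, shiftF B i) → ProvCuti T (B ∪ C, D) →
      ProvCuti T (A ∪ shiftF C i, shiftF D i)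

/-- Provability from `T` using the rules (Ref) and (Sim_i). -/
inductive ProvRS [DecidableEq Y] (T : Set (Fml Y)) : Fml Y → Prop
  | hyp {φ : Fml Y} : φ ∈ T → ProvRS T φ
  | ref (A : Finset (Y × ℤ)) : ProvRS T (A, A)
  | simi {A B C D : Finset (Y × ℤ)} (i : ℤ) :
      ProvRS T (A, shiftF B i) → ProvRS T (C, D) →
      ProvRS T (A ∪ shiftF (C \ B) i, shiftF D i)

/-- The closure operator induced by a closure system `S`. -/
def closOp (S : Set (Set (Y × ℤ))) (M : Set (Y × ℤ)) : Set (Y × ℤ) :=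
  ⋂₀ {N | N ∈ S ∧ M ⊆ N}

/-- The least time point occurring in a finite set (`0` for the empty set). -/
def lo (A : Finset (Y × ℤ)) : ℤ :=
  (A.image Prod.snd).min.untopD 0

/-- The greatest time point occurring in a finite set (`0` for the empty set). -/
def hi (A : Finset (Y × ℤ)) : ℤ :=
  (A.image Prod.snd).max.unbotD 0

/-- A formula `A ⇒ B` is predictive if `A ≠ ∅`, `B ≠ ∅`, and every time point in
`A` is less than or equal to every time point in `B`. -/
def Predictive (φ : Fml Y) : Prop :=
  φ.1.Nonempty ∧ φ.2.Nonempty ∧ ∀ p ∈ φ.1, ∀ q ∈ φ.2, p.2 ≤ q.2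

/-!
Validity of `A ⇒ B` in `M` at time `i` is classical validity of `A ⇒ B` in the shifted set
`M - i`. Hence `M ⊨ φ` iff every shift of `M` classically satisfies `φ`, which gives
`Mod(Σ) = Mod^PL(Σ^PL)` by unfolding. For entailment, `Mod(Σ)` is closed under time shifts,
so quantifying over all its members already quantifies over all their shifts.
-/

lemma mem_shiftS {M : Set (Y × ℤ)} {j : ℤ} {p : Y × ℤ} :
    p ∈ shiftS M j ↔ (p.1, p.2 - j) ∈ M := by
  constructor
  · rintro ⟨q, hq, rfl⟩
    simpa using hq
  · intro h
    exact ⟨(p.1, p.2 - j), h, by simp⟩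

@[simp]
lemma shiftS_zero (M : Set (Y × ℤ)) : shiftS M 0 = M := by
  simp [shiftS]

lemma shiftS_shiftS (M : Set (Y × ℤ)) (i j : ℤ) : shiftS (shiftS M i) j = shiftS M (i + j) := by
  simp only [shiftS, Set.image_image, add_assoc]

lemma coe_shiftF [DecidableEq Y] (A : Finset (Y × ℤ)) (i : ℤ) :
    (↑(shiftF A i) : Set (Y × ℤ)) = shiftS ↑A i := by
  simp [shiftF, shiftS]

lemma shiftS_subset_iff {N M : Set (Y × ℤ)} {i : ℤ} : shiftS N i ⊆ M ↔ N ⊆ shiftS M (-i) := by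
  rw [shiftS, Set.image_subset_iff]
  congr! 1
  ext p
  rw [Set.mem_preimage, mem_shiftS, sub_neg_eq_add]

lemma holds_iff_forall_holdsPL_shiftS [DecidableEq Y] {M : Set (Y × ℤ)} {φ : Fml Y} :
    Holds M φ ↔ ∀ i, HoldsPL (shiftS M i) φ := by
  simp only [Holds, HoldsPL, coe_shiftF, shiftS_subset_iff]
  exact ⟨fun h i => by simpa using h (-i), fun h i => h (-i)⟩

lemma Holds.shiftS [DecidableEq Y] {M : Set (Y × ℤ)} {φ : Fml Y} (h : Holds M φ) (j : ℤ) :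
    Holds (shiftS M j) φ := by
  rw [holds_iff_forall_holdsPL_shiftS] at h ⊢
  intro i
  rw [shiftS_shiftS]
  exact h (j + i)

lemma shiftS_mem_mods [DecidableEq Y] {T : Set (Fml Y)} {M : Set (Y × ℤ)} (hM : M ∈ Mods T)
    (j : ℤ) : shiftS M j ∈ Mods T :=
  fun φ hφ => (hM φ hφ).shiftS j

lemma mods_eq_modsPL_shiftAll [DecidableEq Y] (T : Set (Fml Y)) :
    Mods T = ModsPL (shiftAll T) := by
  ext M
  constructor
  · rintro h _ ⟨φ, hφ, i, rfl⟩
    exact h φ hφ i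
  · intro h φ hφ i
    exact h _ ⟨φ, hφ, i, rfl⟩

lemma entails_iff_entailsPL_shiftAll [DecidableEq Y] (T : Set (Fml Y)) (φ : Fml Y) :
    Entails T φ ↔ EntailsPL (shiftAll T) φ := by
  simp only [Entails, EntailsPL, ← mods_eq_modsPL_shiftAll, holds_iff_forall_holdsPL_shiftS]
  exact ⟨fun h M hM => by simpa using h M hM 0,
    fun h M hM i => h _ (shiftS_mem_mods hM i)⟩

theorem mods_eq_modsPL_general [DecidableEq Y]
    (T : Set (Fml Y)) :
    Mods T = ModsPL (shiftAll T) ∧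
    ∀ A B : Finset (Y × ℤ), Entails T (A, B) ↔ EntailsPL (shiftAll T) (A, B) :=
  ⟨mods_eq_modsPL_shiftAll T, fun A B => entails_iff_entailsPL_shiftAll T (A, B)⟩

/-- `Mod(Σ) = Mod^PL(Σ^PL)`; consequently `Σ ⊨ A ⇒ B` iff
`Σ^PL ⊨_PL A ⇒ B`. -/
theorem mods_eq_modsPL [DecidableEq Y] [Fintype Y] [Nonempty Y]
    (T : Set (Fml Y)) :
    Mods T = ModsPL (shiftAll T) ∧
    ∀ A B : Finset (Y × ℤ), Entails T (A, B) ↔ EntailsPL (shiftAll T) (A, B) :=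
  mods_eq_modsPL_general T

end TAI
end

section
/- For every theory Σ and all finite subsets A, B of T_Y: B ⊆ A_Σ^ω if and only if Σ ⊢ A ⇒ B. -/
/-!
`A_Σ^ω` is a model of `Σ` containing `A`: the premise `E + i` of a shifted axiom is finite, so it
already lies in some stage `A_Σ^n`, and then `F + i` lies in the next one. As the rules are sound
for models, `Σ ⊢ A ⇒ B` gives `B ⊆ A_Σ^ω`. Conversely, every element of `A_Σ^n` is derivable
from `A`, by induction on `n`: an element of `F + i` added at stage `n + 1` is reached by chaining
`A ⇒ E + i` with the shifted axiom `E + i ⇒ F + i`.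
-/

namespace TAI

variable {Y : Type*}

section Closure

variable [DecidableEq Y]

lemma shiftF_zero (A : Finset (Y × ℤ)) : shiftF A 0 = A := by
  simp [shiftF]

lemma shiftF_union (A B : Finset (Y × ℤ)) (i : ℤ) :
    shiftF (A ∪ B) i = shiftF A i ∪ shiftF B i :=
  Finset.image_union _ _

lemma shiftF_shiftF (A : Finset (Y × ℤ)) (j i : ℤ) :
    shiftF (shiftF A j) i = shiftF A (j + i) := by
  simp only [shiftF, Finset.image_image, Function.comp_def, add_assoc]

lemma Holds.subset {M : Set (Y × ℤ)} {A B : Finset (Y × ℤ)} (h : Holds M (A, B))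
    (hA : ↑A ⊆ M) : ↑B ⊆ M := by
  simpa only [shiftF_zero] using h 0 (by rwa [shiftF_zero])

section Prov

variable {T : Set (Fml Y)} {A B C : Finset (Y × ℤ)}

lemma Prov.holds_of_mem_Mods {φ : Fml Y} (h : Prov T φ) {M : Set (Y × ℤ)}
    (hM : M ∈ Mods T) : Holds M φ := by
  induction h with
  | hyp hφ => exact hM _ hφ
  | ax A B =>
    intro i hi
    rw [shiftF_union, Finset.coe_union] at hi
    exact Set.union_subset_iff.mp hi |>.1
  | cut _ _ ihAB ihBCD =>
    intro i hi
    rw [shiftF_union, Finset.coe_union, Set.union_subset_iff] at hi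
    exact ihBCD i (by
      rw [shiftF_union, Finset.coe_union]
      exact Set.union_subset (ihAB i hi.1) hi.2)
  | shf j _ ih =>
    intro i hi
    rw [shiftF_shiftF] at hi ⊢
    exact ih (j + i) hi

lemma Prov.of_subset (h : B ⊆ A) : Prov T (A, B) := by
  simpa only [Finset.union_eq_right.mpr h] using Prov.ax (T := T) B A

lemma Prov.trans (hAB : Prov T (A, B)) (hBC : Prov T (B, C)) : Prov T (A, C) := by
  simpa only [Finset.union_empty] using hAB.cut (C := ∅) (by simpa only [Finset.union_empty])

lemma Prov.union (hAB : Prov T (A, B)) (hAC : Prov T (A, C)) : Prov T (A, B ∪ C) := by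
  have hABC : Prov T (A ∪ B, B ∪ C) := hAC.cut (Prov.of_subset (Finset.union_comm B C).le)
  rw [Finset.union_comm A B] at hABC
  simpa only [Finset.union_self] using hAB.cut hABC

lemma Prov.of_forall_singleton (h : ∀ x ∈ C, Prov T (A, {x})) : Prov T (A, C) := by
  induction C using Finset.induction_on with
  | empty => exact Prov.of_subset (Finset.empty_subset A)
  | insert x C _ ih =>
    rw [Finset.insert_eq]
    exact (h x (Finset.mem_insert_self x C)).union
      (ih fun y hy => h y (Finset.mem_insert_of_mem hy))

end Prov

section synClos

variable (T : Set (Fml Y)) (M : Set (Y × ℤ))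

lemma synIter_mono : Monotone (synIter T M) :=
  monotone_nat_of_le_succ fun _ => Set.subset_union_left

lemma subset_synClos : M ⊆ synClos T M :=
  Set.subset_iUnion (synIter T M) 0

lemma shiftF_subset_synIter_succ {n : ℕ} {φ : Fml Y} (hφ : φ ∈ T) {i : ℤ}
    (h : ↑(shiftF φ.1 i) ⊆ synIter T M n) : ↑(shiftF φ.2 i) ⊆ synIter T M (n + 1) :=
  fun _ hx => Or.inr ⟨_, ⟨φ, hφ, i, h, rfl⟩, hx⟩

lemma synClos_mem_Mods : synClos T M ∈ Mods T := by
  intro φ hφ i hi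
  obtain ⟨n, hn⟩ :=
    (synIter_mono T M).directed_le.exists_mem_subset_of_finset_subset_biUnion hi
  exact (shiftF_subset_synIter_succ T M hφ hn).trans (Set.subset_iUnion _ (n + 1))

end synClos

lemma prov_singleton_of_mem_synIter {T : Set (Fml Y)} {A : Finset (Y × ℤ)} {x : Y × ℤ} :
    ∀ n : ℕ, x ∈ synIter T ↑A n → Prov T (A, {x})
  | 0, hx => Prov.of_subset (Finset.singleton_subset_iff.mpr hx)
  | n + 1, Or.inl hx => prov_singleton_of_mem_synIter n hx
  | n + 1, Or.inr ⟨_, ⟨φ, hφ, i, hprem, rfl⟩, hx⟩ =>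
    have hA : Prov T (A, shiftF φ.1 i) :=
      Prov.of_forall_singleton fun _ hy => prov_singleton_of_mem_synIter n (hprem hy)
    (hA.trans (Prov.shf i (Prov.hyp hφ))).trans
      (Prov.of_subset (Finset.singleton_subset_iff.mpr hx))

end Closure

theorem synClos_iff_prov_general [DecidableEq Y]
    (T : Set (Fml Y)) (A B : Finset (Y × ℤ)) :
    ↑B ⊆ synClos T ↑A ↔ Prov T (A, B) := by
  constructor
  · intro hB
    refine Prov.of_forall_singleton fun x hx => ?_
    obtain ⟨n, hn⟩ := Set.mem_iUnion.mp (hB hx)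
    exact prov_singleton_of_mem_synIter n hn
  · intro h
    exact (h.holds_of_mem_Mods (synClos_mem_Mods T ↑A)).subset (subset_synClos T ↑A)

/-- `B ⊆ A_Σ^ω` iff `Σ ⊢ A ⇒ B`. -/
theorem synClos_iff_prov [DecidableEq Y] [Fintype Y] [Nonempty Y]
    (T : Set (Fml Y)) (A B : Finset (Y × ℤ)) :
    ↑B ⊆ synClos T ↑A ↔ Prov T (A, B) :=
  synClos_iff_prov_general T A B

end TAI
end

section
/- For every theory Σ and every attribute implication A ⇒ B annotated by time points: Σ ⊢ A ⇒ B if and only if there exists a finite subset Σ' of Σ^PL such that A ⇒ B is provable from Σ' using only the rules (Ax) and (Cut) (i.e., without using the time-shift rule (Shf)). -/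
namespace TAI

variable {Y : Type*}

/-!
Every use of (Shf) can be pushed up to the hypotheses: an (Ax)/(Cut) proof shifted by `i`
is again an (Ax)/(Cut) proof, from the shifted hypotheses, and `Σ^PL` is closed under shifts.
Hence `Σ ⊢ φ` iff `φ` is (Ax)/(Cut)-provable from `Σ^PL`, and such a proof uses only finitely
many hypotheses.
-/

section

variable [DecidableEq Y]

lemma mem_shiftAll_of_mem {T : Set (Fml Y)} {φ : Fml Y} (hφ : φ ∈ T) : φ ∈ shiftAll T :=
  ⟨φ, hφ, 0, by simp [shiftF_zero]⟩

lemma shift_mem_shiftAll {T : Set (Fml Y)} {φ : Fml Y} (hφ : φ ∈ shiftAll T) (i : ℤ) :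
    (shiftF φ.1 i, shiftF φ.2 i) ∈ shiftAll T := by
  obtain ⟨ψ, hψ, j, rfl⟩ := hφ
  exact ⟨ψ, hψ, j + i, by simp [shiftF_shiftF]⟩

lemma ProvAC.mono {S S' : Set (Fml Y)} (h : S ⊆ S') {φ : Fml Y} (hφ : ProvAC S φ) :
    ProvAC S' φ := by
  induction hφ with
  | hyp hψ => exact .hyp (h hψ)
  | ax A B => exact .ax A B
  | cut _ _ ih₁ ih₂ => exact .cut ih₁ ih₂

lemma ProvAC.shift {S : Set (Fml Y)} {φ : Fml Y} (hφ : ProvAC S φ) (i : ℤ) :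
    ProvAC ((fun ψ : Fml Y => (shiftF ψ.1 i, shiftF ψ.2 i)) '' S)
      (shiftF φ.1 i, shiftF φ.2 i) := by
  induction hφ with
  | hyp hψ => exact .hyp ⟨_, hψ, rfl⟩
  | ax A B => simpa only [shiftF_union] using ProvAC.ax (T := _) (shiftF A i) (shiftF B i)
  | cut _ _ ih₁ ih₂ =>
    simp only [shiftF_union] at ih₂ ⊢
    exact .cut ih₁ ih₂

lemma ProvAC.exists_finset {S : Set (Fml Y)} {φ : Fml Y} (hφ : ProvAC S φ) :
    ∃ S' : Finset (Fml Y), ↑S' ⊆ S ∧ ProvAC (↑S' : Set (Fml Y)) φ := by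
  induction hφ with
  | @hyp ψ hψ => exact ⟨{ψ}, by simpa using hψ, .hyp (by simp)⟩
  | ax A B => exact ⟨∅, by simp, .ax A B⟩
  | cut _ _ ih₁ ih₂ =>
    obtain ⟨S₁, hS₁, h₁⟩ := ih₁
    obtain ⟨S₂, hS₂, h₂⟩ := ih₂
    refine ⟨S₁ ∪ S₂, by simpa using And.intro hS₁ hS₂, .cut (h₁.mono ?_) (h₂.mono ?_)⟩ <;>
      simp

lemma ProvAC.prov {T S : Set (Fml Y)} (hS : ∀ ψ ∈ S, Prov T ψ) {φ : Fml Y}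
    (hφ : ProvAC S φ) : Prov T φ := by
  induction hφ with
  | hyp hψ => exact hS _ hψ
  | ax A B => exact .ax A B
  | cut _ _ ih₁ ih₂ => exact .cut ih₁ ih₂

lemma prov_of_mem_shiftAll {T : Set (Fml Y)} {φ : Fml Y} (hφ : φ ∈ shiftAll T) : Prov T φ := by
  obtain ⟨ψ, hψ, i, rfl⟩ := hφ
  exact .shf i (.hyp hψ)

lemma ProvAC.shift_of_shiftAll {T : Set (Fml Y)} {φ : Fml Y} (hφ : ProvAC (shiftAll T) φ)
    (i : ℤ) : ProvAC (shiftAll T) (shiftF φ.1 i, shiftF φ.2 i) :=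
  (hφ.shift i).mono <| by
    rintro _ ⟨ψ, hψ, rfl⟩
    exact shift_mem_shiftAll hψ i

lemma Prov.provAC_shiftAll {T : Set (Fml Y)} {φ : Fml Y} (hφ : Prov T φ) :
    ProvAC (shiftAll T) φ := by
  induction hφ with
  | hyp hψ => exact .hyp (mem_shiftAll_of_mem hψ)
  | ax A B => exact .ax A B
  | cut _ _ ih₁ ih₂ => exact .cut ih₁ ih₂
  | shf i _ ih => exact ih.shift_of_shiftAll i

end

theorem prov_iff_finite_shiftAll_provAC_general [DecidableEq Y]
    (T : Set (Fml Y)) (A B : Finset (Y × ℤ)) :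
    Prov T (A, B) ↔
      ∃ T' : Finset (Fml Y), ↑T' ⊆ shiftAll T ∧ ProvAC (↑T' : Set (Fml Y)) (A, B) := by
  constructor
  · exact fun h => h.provAC_shiftAll.exists_finset
  · rintro ⟨T', hT', h⟩
    exact h.prov fun ψ hψ => prov_of_mem_shiftAll (hT' hψ)

/-- `Σ ⊢ A ⇒ B` iff there is a finite `Σ' ⊆ Σ^PL` such that
`A ⇒ B` is provable from `Σ'` using only (Ax) and (Cut). -/
theorem prov_iff_finite_shiftAll_provAC [DecidableEq Y] [Fintype Y] [Nonempty Y]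
    (T : Set (Fml Y)) (A B : Finset (Y × ℤ)) :
    Prov T (A, B) ↔
      ∃ T' : Finset (Fml Y), ↑T' ⊆ shiftAll T ∧ ProvAC (↑T' : Set (Fml Y)) (A, B) :=
  prov_iff_finite_shiftAll_provAC_general T A B

end TAI
end
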